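/- arXiv:2007.13057 — 2 statements merged into one kernel-verified Lean document; each statement's English description precedes it below -/
import Mathlib

section
/- Let A ∈ ℍ^{m×a}, B ∈ ℍ^{b×n}, C ∈ ℍ^{m×c}, D ∈ ℍ^{d×n}, E ∈ ℍ^{m×n} be quaternion matrices, and set P = R_A C, Q = D L_B, S = C L_P. The generalized Sylvester equation A X B + C Y D = E has a solution (X, Y) with X ∈ ℍ^{a×b}, Y ∈ ℍ^{c×d} if and only if R_P R_A E = 0, E L_B L_Q = 0, R_A E L_D = 0 and R_C E L_B = 0. -/
open Matrix

/-- The four Penrose equations over the quaternions: `X` is a Moore–Penrose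
inverse of `A`. -/
def IsMP {m n : Type*} [Fintype m] [Fintype n]
    (A : Matrix m n (Quaternion ℝ)) (X : Matrix n m (Quaternion ℝ)) : Prop :=
  A * X * A = A ∧ X * A * X = X ∧ (A * X)ᴴ = A * X ∧ (X * A)ᴴ = X * A

/-!
Writing `A X B = E - C Y D`, Penrose's criterion for two-sided equations reduces the equation to
the system `P Y D = F`, `C Y Q = G` in `Y` alone, where `F = R_A E` and `G = E L_B`. Each of the
two equations is solvable on its own under two of the four conditions, and since `P = R_A C`,
`Q = D L_B` and `R_A G = F L_B`, the correction `Y = P† F D† + L_P C† G Q†` solves both at once.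
-/

namespace Matrix

variable {R : Type*} [Ring R]

theorem one_sub_mul_eq_zero_iff {m n : Type*} [Fintype m] [DecidableEq m]
    (M : Matrix m m R) (G : Matrix m n R) : (1 - M) * G = 0 ↔ M * G = G := by
  rw [Matrix.sub_mul, Matrix.one_mul, sub_eq_zero, eq_comm]

theorem mul_one_sub_eq_zero_iff {m n : Type*} [Fintype n] [DecidableEq n]
    (G : Matrix m n R) (M : Matrix n n R) : G * (1 - M) = 0 ↔ G * M = G := by
  rw [Matrix.mul_sub, Matrix.mul_one, sub_eq_zero, eq_comm]

theorem one_sub_mul_mul_self_eq_zero {m n : Type*} [Fintype m] [Fintype n] [DecidableEq m]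
    {A : Matrix m n R} {Ad : Matrix n m R} (hA : A * Ad * A = A) : (1 - A * Ad) * A = 0 :=
  (one_sub_mul_eq_zero_iff _ _).2 hA

theorem self_mul_one_sub_mul_eq_zero {m n : Type*} [Fintype m] [Fintype n] [DecidableEq n]
    {A : Matrix m n R} {Ad : Matrix n m R} (hA : A * Ad * A = A) : A * (1 - Ad * A) = 0 :=
  (mul_one_sub_eq_zero_iff _ _).2 (by rw [← Matrix.mul_assoc, hA])

/-- Penrose: when solvable, `X = A† G B†` is a solution. -/
theorem exists_mul_mul_eq_iff {m n k l : Type*} [Fintype m] [Fintype n] [Fintype k] [Fintype l]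
    [DecidableEq m] [DecidableEq n]
    {A : Matrix m k R} {Ad : Matrix k m R} {B : Matrix l n R} {Bd : Matrix n l R}
    (hA : A * Ad * A = A) (hB : B * Bd * B = B) (G : Matrix m n R) :
    (∃ X : Matrix k l R, A * X * B = G) ↔ (1 - A * Ad) * G = 0 ∧ G * (1 - Bd * B) = 0 := by
  constructor
  · rintro ⟨X, rfl⟩
    constructor
    · rw [← Matrix.mul_assoc, ← Matrix.mul_assoc, one_sub_mul_mul_self_eq_zero hA,
        Matrix.zero_mul, Matrix.zero_mul]
    · rw [Matrix.mul_assoc, self_mul_one_sub_mul_eq_zero hB, Matrix.mul_zero]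
  · rintro ⟨hl, hr⟩
    rw [one_sub_mul_eq_zero_iff] at hl
    rw [mul_one_sub_eq_zero_iff] at hr
    refine ⟨Ad * G * Bd, ?_⟩
    rw [← Matrix.mul_assoc, ← Matrix.mul_assoc, Matrix.mul_assoc _ Bd, hl, hr]

theorem exists_mul_mul_eq_and_mul_mul_eq_iff {m n k l : Type*}
    [Fintype m] [Fintype n] [Fintype k] [Fintype l]
    [DecidableEq m] [DecidableEq n] [DecidableEq k]
    {P C : Matrix m k R} {D Q : Matrix l n R} {U : Matrix m m R} {V : Matrix n n R}
    {Pd Cd : Matrix k m R} {Dd Qd : Matrix n l R}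
    (hP : P * Pd * P = P) (hC : C * Cd * C = C) (hD : D * Dd * D = D) (hQ : Q * Qd * Q = Q)
    (hPC : P = U * C) (hQD : Q = D * V) {F G : Matrix m n R} (hcompat : U * G = F * V) :
    (∃ Y : Matrix k l R, P * Y * D = F ∧ C * Y * Q = G) ↔
      (1 - P * Pd) * F = 0 ∧ G * (1 - Qd * Q) = 0 ∧
        F * (1 - Dd * D) = 0 ∧ (1 - C * Cd) * G = 0 := by
  constructor
  · rintro ⟨Y, rfl, rfl⟩
    obtain ⟨hF₁, hF₂⟩ := (exists_mul_mul_eq_iff hP hD _).1 ⟨Y, rfl⟩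
    obtain ⟨hG₁, hG₂⟩ := (exists_mul_mul_eq_iff hC hQ _).1 ⟨Y, rfl⟩
    exact ⟨hF₁, hG₂, hF₂, hG₁⟩
  · rintro ⟨hF₁, hG₂, hF₂, hG₁⟩
    rw [one_sub_mul_eq_zero_iff] at hF₁ hG₁
    rw [mul_one_sub_eq_zero_iff] at hF₂ hG₂
    refine ⟨Pd * F * Dd + (1 - Pd * P) * Cd * G * Qd, ?_, ?_⟩
    · have hPLP : P * (1 - Pd * P) = 0 := self_mul_one_sub_mul_eq_zero hP
      simp only [Matrix.mul_add, ← Matrix.mul_assoc, hPLP, Matrix.zero_mul, add_zero]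
      rw [hF₁, Matrix.mul_assoc F, hF₂]
    · -- `C P† F D† Q = C P† F V = C P† U G = C P† P C† G` cancels against the `L_P` term
      have hPCdG : P * Cd * G = U * G := by
        rw [hPC, Matrix.mul_assoc U, Matrix.mul_assoc U, hG₁]
      have hFDdQ : F * Dd * Q = F * V := by
        rw [hQD, ← Matrix.mul_assoc, Matrix.mul_assoc F, hF₂]
      calc C * (Pd * F * Dd + (1 - Pd * P) * Cd * G * Qd) * Q
          = C * Pd * (F * Dd * Q) + C * Cd * (G * (Qd * Q)) -
              C * Pd * (P * Cd * (G * (Qd * Q))) := by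
            simp only [Matrix.mul_add, Matrix.add_mul, Matrix.mul_sub, Matrix.sub_mul,
              Matrix.one_mul, Matrix.mul_assoc]
            abel
        _ = G := by
            rw [hG₂, hFDdQ, hPCdG, hcompat, hG₁, add_sub_cancel_left]

end Matrix

theorem axb_plus_cyd_solvable_iff_general {m a b n c d : Type*}
    [Fintype m] [Fintype a] [Fintype b] [Fintype n] [Fintype c] [Fintype d]
    [DecidableEq m] [DecidableEq n] [DecidableEq c]
    (A : Matrix m a (Quaternion ℝ)) (B : Matrix b n (Quaternion ℝ))
    (C : Matrix m c (Quaternion ℝ)) (D : Matrix d n (Quaternion ℝ))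
    (E : Matrix m n (Quaternion ℝ))
    (Ad : Matrix a m (Quaternion ℝ)) (Bd : Matrix n b (Quaternion ℝ))
    (Cd : Matrix c m (Quaternion ℝ)) (Dd : Matrix n d (Quaternion ℝ))
    (hA : IsMP A Ad) (hB : IsMP B Bd) (hC : IsMP C Cd) (hD : IsMP D Dd)
    (P : Matrix m c (Quaternion ℝ)) (Q : Matrix d n (Quaternion ℝ))
    (hP : P = (1 - A * Ad) * C) (hQ : Q = D * (1 - Bd * B))
    (Pd : Matrix c m (Quaternion ℝ)) (Qd : Matrix n d (Quaternion ℝ))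
    (hPd : IsMP P Pd) (hQd : IsMP Q Qd) :
    (∃ (X : Matrix a b (Quaternion ℝ)) (Y : Matrix c d (Quaternion ℝ)),
        A * X * B + C * Y * D = E) ↔
      (1 - P * Pd) * (1 - A * Ad) * E = 0 ∧
      E * (1 - Bd * B) * (1 - Qd * Q) = 0 ∧
      (1 - A * Ad) * E * (1 - Dd * D) = 0 ∧
      (1 - C * Cd) * E * (1 - Bd * B) = 0 := by
  have reduce_to_Y : ∀ Y : Matrix c d (Quaternion ℝ),
      (∃ X : Matrix a b (Quaternion ℝ), A * X * B + C * Y * D = E) ↔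
        P * Y * D = (1 - A * Ad) * E ∧ C * Y * Q = E * (1 - Bd * B) := by
    intro Y
    simp only [← eq_sub_iff_add_eq]
    rw [exists_mul_mul_eq_iff hA.1 hB.1, Matrix.mul_sub (1 - A * Ad) E,
      Matrix.sub_mul E (C * Y * D), sub_eq_zero, sub_eq_zero, hP, hQ]
    simp only [Matrix.mul_assoc]
    exact and_congr eq_comm eq_comm
  rw [exists_comm]
  simp only [reduce_to_Y]
  rw [Matrix.exists_mul_mul_eq_and_mul_mul_eq_iff hPd.1 hC.1 hD.1 hQd.1 hP hQ
    (Matrix.mul_assoc _ _ _).symm]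
  simp only [Matrix.mul_assoc]

/-- With `P = R_A C`, `Q = D L_B`, the generalized Sylvester equation
`A X B + C Y D = E` is solvable iff
`R_P R_A E = 0`, `E L_B L_Q = 0`, `R_A E L_D = 0` and `R_C E L_B = 0`. -/
theorem axb_plus_cyd_solvable_iff {m a b n c d : Type*}
    [Fintype m] [Fintype a] [Fintype b] [Fintype n] [Fintype c] [Fintype d]
    [DecidableEq m] [DecidableEq n] [DecidableEq c] [DecidableEq d]
    (A : Matrix m a (Quaternion ℝ)) (B : Matrix b n (Quaternion ℝ))
    (C : Matrix m c (Quaternion ℝ)) (D : Matrix d n (Quaternion ℝ))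
    (E : Matrix m n (Quaternion ℝ))
    (Ad : Matrix a m (Quaternion ℝ)) (Bd : Matrix n b (Quaternion ℝ))
    (Cd : Matrix c m (Quaternion ℝ)) (Dd : Matrix n d (Quaternion ℝ))
    (hA : IsMP A Ad) (hB : IsMP B Bd) (hC : IsMP C Cd) (hD : IsMP D Dd)
    (P : Matrix m c (Quaternion ℝ)) (Q : Matrix d n (Quaternion ℝ))
    (hP : P = (1 - A * Ad) * C) (hQ : Q = D * (1 - Bd * B))
    (Pd : Matrix c m (Quaternion ℝ)) (Qd : Matrix n d (Quaternion ℝ))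
    (hPd : IsMP P Pd) (hQd : IsMP Q Qd) :
    (∃ (X : Matrix a b (Quaternion ℝ)) (Y : Matrix c d (Quaternion ℝ)),
        A * X * B + C * Y * D = E) ↔
      (1 - P * Pd) * (1 - A * Ad) * E = 0 ∧
      E * (1 - Bd * B) * (1 - Qd * Q) = 0 ∧
      (1 - A * Ad) * E * (1 - Dd * D) = 0 ∧
      (1 - C * Cd) * E * (1 - Bd * B) = 0 :=
  axb_plus_cyd_solvable_iff_general A B C D E Ad Bd Cd Dd hA hB hC hD P Q hP hQ Pd Qd hPd hQd
end

section
/- Let A ∈ ℍ^{m×a}, B ∈ ℍ^{b×n}, C ∈ ℍ^{m×c}, D ∈ ℍ^{d×n}, E ∈ ℍ^{m×n} be quaternion matrices and set P = R_A C, Q = D L_B, S = C L_P. If (X, Y) with X ∈ ℍ^{a×b}, Y ∈ ℍ^{c×d} is any solution of A X B + C Y D = E, then there exist quaternion matrices U₁, U₂, U₃, U₄, U₅ of the appropriate sizes such that X = A† E B† − A† C P† E B† − A† S C† E Q† D B† − A† S U₂ R_Q D B† + L_A U₄ + U₅ R_B and Y = P† E D† + S† S C† E Q† + L_P L_S U₁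 + L_P U₂ R_Q + U₃ R_D. -/
/-!
Take `U₁ = Y Q Q†`, `U₂ = Y`, `U₃ = P† P Y`, `U₄ = X`, `U₅ = A† A X`. Everything rests on the
annihilation rule "if `P = R_A C` then `P† A = 0`" (as `P† = P† P†* P*` and `P* A = C* R_A A = 0`)
and its mirror image "if `Q = D L_B` then `B Q† = 0`"; applied to `P`, `Q` and `S = C L_P` they give
`P† E = P† P Y D`, `S C† E Q† = S Y Q Q†` and `P S† = 0`, after which both formulas are ring
identities.
-/

open Matrix

open scoped Quaternion

namespace IsMP

variable {k m n : Type*} [Fintype m] [Fintype n] {A : Matrix m n ℍ[ℝ]} {X : Matrix n m ℍ[ℝ]}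

theorem eq_conjTranspose_mul (h : IsMP A X) : X = Aᴴ * (Xᴴ * X) := by
  rw [← Matrix.mul_assoc, ← conjTranspose_mul, h.2.2.2, h.2.1]

theorem eq_mul_conjTranspose (h : IsMP A X) : X = X * Xᴴ * Aᴴ := by
  rw [Matrix.mul_assoc, ← conjTranspose_mul, h.2.2.1, ← Matrix.mul_assoc, h.2.1]

theorem mul_eq_zero_of_conjTranspose_mul_eq_zero (h : IsMP A X) {M : Matrix m k ℍ[ℝ]}
    (hM : Aᴴ * M = 0) : X * M = 0 := by
  rw [h.eq_mul_conjTranspose, Matrix.mul_assoc, hM, Matrix.mul_zero]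

theorem mul_eq_zero_of_mul_conjTranspose_eq_zero (h : IsMP A X) {M : Matrix k n ℍ[ℝ]}
    (hM : M * Aᴴ = 0) : M * X = 0 := by
  rw [h.eq_conjTranspose_mul, ← Matrix.mul_assoc, hM, Matrix.zero_mul]

theorem one_sub_mul_pinv_mul_self [DecidableEq m] (h : IsMP A X) : (1 - A * X) * A = 0 := by
  rw [Matrix.sub_mul, Matrix.one_mul, h.1, sub_self]

theorem self_mul_one_sub_pinv_mul [DecidableEq n] (h : IsMP A X) : A * (1 - X * A) = 0 := by
  rw [Matrix.mul_sub, Matrix.mul_one, ← Matrix.mul_assoc, h.1, sub_self]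

theorem conjTranspose_one_sub_mul_pinv [DecidableEq m] (h : IsMP A X) :
    (1 - A * X)ᴴ = 1 - A * X := by
  rw [conjTranspose_sub, conjTranspose_one, h.2.2.1]

theorem conjTranspose_one_sub_pinv_mul [DecidableEq n] (h : IsMP A X) :
    (1 - X * A)ᴴ = 1 - X * A := by
  rw [conjTranspose_sub, conjTranspose_one, h.2.2.2]

theorem pinv_mul_eq_zero_of_isMP_one_sub_mul_pinv_mul [Fintype k] [DecidableEq m]
    {C : Matrix m k ℍ[ℝ]} {Pd : Matrix k m ℍ[ℝ]} (h : IsMP A X)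
    (hPd : IsMP ((1 - A * X) * C) Pd) : Pd * A = 0 :=
  hPd.mul_eq_zero_of_conjTranspose_mul_eq_zero <| by
    rw [conjTranspose_mul, h.conjTranspose_one_sub_mul_pinv, Matrix.mul_assoc,
      h.one_sub_mul_pinv_mul_self, Matrix.mul_zero]

theorem mul_pinv_eq_zero_of_isMP_mul_one_sub_pinv_mul [Fintype k] [DecidableEq n]
    {D : Matrix k n ℍ[ℝ]} {Qd : Matrix n k ℍ[ℝ]} (h : IsMP A X)
    (hQd : IsMP (D * (1 - X * A)) Qd) : A * Qd = 0 :=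
  hQd.mul_eq_zero_of_mul_conjTranspose_eq_zero <| by
    rw [conjTranspose_mul, h.conjTranspose_one_sub_pinv_mul, ← Matrix.mul_assoc,
      h.self_mul_one_sub_pinv_mul, Matrix.zero_mul]

end IsMP

section AXBPlusCYD

variable {m a b n c d : Type*} [Fintype a] [Fintype b] [Fintype c] [Fintype d]
  {A : Matrix m a ℍ[ℝ]} {B : Matrix b n ℍ[ℝ]} {C : Matrix m c ℍ[ℝ]} {D : Matrix d n ℍ[ℝ]}
  {E : Matrix m n ℍ[ℝ]} {Ad : Matrix a m ℍ[ℝ]} {Bd : Matrix n b ℍ[ℝ]} {Cd : Matrix c m ℍ[ℝ]}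
  {P : Matrix m c ℍ[ℝ]} {Q : Matrix d n ℍ[ℝ]} {Pd : Matrix c m ℍ[ℝ]} {Qd : Matrix n d ℍ[ℝ]}
  {Dd : Matrix n d ℍ[ℝ]} {S : Matrix m c ℍ[ℝ]} {Sd : Matrix c m ℍ[ℝ]} {X : Matrix a b ℍ[ℝ]}
  {Y : Matrix c d ℍ[ℝ]}

theorem pinv_mul_rhs_eq [Fintype m] [DecidableEq m] (hA : IsMP A Ad)
    (hP : P = (1 - A * Ad) * C) (hPd : IsMP P Pd)
    (hXY : A * X * B + C * Y * D = E) : Pd * E = Pd * P * Y * D := by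
  have hPdA : Pd * A = 0 := hA.pinv_mul_eq_zero_of_isMP_one_sub_mul_pinv_mul (hP ▸ hPd)
  have hPdP : Pd * P = Pd * C := by
    rw [hP, ← Matrix.mul_assoc, Matrix.mul_sub, Matrix.mul_one, ← Matrix.mul_assoc, hPdA,
      Matrix.zero_mul, sub_zero]
  rw [← hXY, Matrix.mul_add, hPdP]
  simp only [← Matrix.mul_assoc, hPdA, Matrix.zero_mul, zero_add]

theorem rhs_mul_pinv_eq [Fintype n] [DecidableEq n] (hB : IsMP B Bd)
    (hQ : Q = D * (1 - Bd * B)) (hQd : IsMP Q Qd)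
    (hXY : A * X * B + C * Y * D = E) : E * Qd = C * Y * Q * Qd := by
  have hBQd : B * Qd = 0 := hB.mul_pinv_eq_zero_of_isMP_mul_one_sub_pinv_mul (hQ ▸ hQd)
  have hQQd : Q * Qd = D * Qd := by
    rw [hQ, Matrix.mul_assoc, Matrix.sub_mul, Matrix.one_mul, Matrix.mul_assoc, hBQd,
      Matrix.mul_zero, sub_zero]
  rw [← hXY, Matrix.add_mul, Matrix.mul_assoc (C * Y), ← hQQd, Matrix.mul_assoc (A * X), hBQd,
    Matrix.mul_zero, zero_add, Matrix.mul_assoc (C * Y) Q]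

theorem rhs_sub_mul_pinv_mul_rhs_eq [Fintype m] [DecidableEq m] [DecidableEq c]
    (hA : IsMP A Ad) (hP : P = (1 - A * Ad) * C) (hPd : IsMP P Pd)
    (hS : S = C * (1 - Pd * P)) (hXY : A * X * B + C * Y * D = E) :
    E - C * Pd * E = A * X * B + S * Y * D := by
  rw [Matrix.mul_assoc C Pd, pinv_mul_rhs_eq hA hP hPd hXY, hS, ← hXY]
  simp only [Matrix.sub_mul, Matrix.mul_one, Matrix.mul_sub, Matrix.mul_assoc]
  abel

theorem mul_pinv_mul_rhs_mul_pinv_eq [Fintype m] [Fintype n] [DecidableEq m] [DecidableEq n]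
    [DecidableEq c] (hB : IsMP B Bd) (hC : IsMP C Cd) (hP : P = (1 - A * Ad) * C)
    (hQ : Q = D * (1 - Bd * B)) (hQd : IsMP Q Qd)
    (hS : S = C * (1 - Pd * P)) (hXY : A * X * B + C * Y * D = E) :
    S * Cd * E * Qd = S * Y * Q * Qd := by
  have hPCdC : P * (Cd * C) = P := by
    rw [hP, Matrix.mul_assoc, ← Matrix.mul_assoc C, hC.1]
  have hSCdC : S * Cd * C = S := by
    rw [hS, Matrix.mul_sub, Matrix.mul_one, Matrix.sub_mul, Matrix.sub_mul, hC.1]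
    simp only [Matrix.mul_assoc, hPCdC]
  rw [Matrix.mul_assoc _ E, rhs_mul_pinv_eq hB hQ hQd hXY]
  simp only [← Matrix.mul_assoc, hSCdC]

theorem solution_form_left [Fintype m] [Fintype n] [DecidableEq a] [DecidableEq b]
    [DecidableEq d] (hE : E - C * Pd * E = A * X * B + S * Y * D)
    (hSE : S * Cd * E * Qd = S * Y * Q * Qd) :
    X = Ad * E * Bd - Ad * C * Pd * E * Bd - Ad * S * Cd * E * Qd * D * Bd
      - Ad * S * Y * (1 - Q * Qd) * D * Bd + (1 - Ad * A) * X + Ad * A * X * (1 - B * Bd) := by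
  have hE' : Ad * E * Bd - Ad * C * Pd * E * Bd = Ad * (A * X * B + S * Y * D) * Bd := by
    rw [← hE]
    simp only [Matrix.mul_sub, Matrix.sub_mul, Matrix.mul_assoc]
  have hSE' : Ad * S * Cd * E * Qd * D * Bd = Ad * (S * Y * Q * Qd) * D * Bd := by
    rw [← hSE]
    simp only [Matrix.mul_assoc]
  rw [hE', hSE']
  simp only [Matrix.mul_add, Matrix.add_mul, Matrix.mul_sub, Matrix.sub_mul, Matrix.mul_one,
    Matrix.one_mul, Matrix.mul_assoc]
  abel

theorem solution_form_right [Fintype m] [Fintype n] [DecidableEq c] [DecidableEq d]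
    (hPdE : Pd * E = Pd * P * Y * D) (hSE : S * Cd * E * Qd = S * Y * Q * Qd)
    (hPSd : P * Sd = 0) :
    Y = Pd * E * Dd + Sd * S * Cd * E * Qd + (1 - Pd * P) * (1 - Sd * S) * (Y * Q * Qd)
      + (1 - Pd * P) * Y * (1 - Q * Qd) + Pd * P * Y * (1 - D * Dd) := by
  have hSE' : Sd * S * Cd * E * Qd = Sd * (S * Y * Q * Qd) := by
    rw [← hSE]
    simp only [Matrix.mul_assoc]
  have hLPLS : (1 - Pd * P) * (1 - Sd * S) = 1 - Pd * P - Sd * S := by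
    rw [Matrix.mul_sub (1 - Pd * P), Matrix.mul_one, ← Matrix.mul_assoc, Matrix.sub_mul 1,
      Matrix.one_mul, Matrix.mul_assoc Pd, hPSd, Matrix.mul_zero, sub_zero]
  rw [hPdE, hSE', hLPLS]
  simp only [Matrix.mul_sub, Matrix.sub_mul, Matrix.mul_one, Matrix.one_mul, Matrix.mul_assoc]
  abel

end AXBPlusCYD

theorem axb_plus_cyd_solution_form_general {m a b n c d : Type*}
    [Fintype m] [Fintype a] [Fintype b] [Fintype n] [Fintype c] [Fintype d]
    [DecidableEq m] [DecidableEq n] [DecidableEq a] [DecidableEq b]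
    [DecidableEq c] [DecidableEq d]
    (A : Matrix m a (Quaternion ℝ)) (B : Matrix b n (Quaternion ℝ))
    (C : Matrix m c (Quaternion ℝ)) (D : Matrix d n (Quaternion ℝ))
    (E : Matrix m n (Quaternion ℝ))
    (Ad : Matrix a m (Quaternion ℝ)) (Bd : Matrix n b (Quaternion ℝ))
    (Cd : Matrix c m (Quaternion ℝ)) (Dd : Matrix n d (Quaternion ℝ))
    (hA : IsMP A Ad) (hB : IsMP B Bd) (hC : IsMP C Cd)
    (P : Matrix m c (Quaternion ℝ)) (Q : Matrix d n (Quaternion ℝ))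
    (hP : P = (1 - A * Ad) * C) (hQ : Q = D * (1 - Bd * B))
    (Pd : Matrix c m (Quaternion ℝ)) (Qd : Matrix n d (Quaternion ℝ))
    (hPd : IsMP P Pd) (hQd : IsMP Q Qd)
    (S : Matrix m c (Quaternion ℝ)) (hS : S = C * (1 - Pd * P))
    (Sd : Matrix c m (Quaternion ℝ)) (hSd : IsMP S Sd)
    (X : Matrix a b (Quaternion ℝ)) (Y : Matrix c d (Quaternion ℝ))
    (hXY : A * X * B + C * Y * D = E) :
    ∃ (U₁ U₂ U₃ : Matrix c d (Quaternion ℝ)) (U₄ U₅ : Matrix a b (Quaternion ℝ)),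
      X = Ad * E * Bd - Ad * C * Pd * E * Bd - Ad * S * Cd * E * Qd * D * Bd
          - Ad * S * U₂ * (1 - Q * Qd) * D * Bd
          + (1 - Ad * A) * U₄ + U₅ * (1 - B * Bd) ∧
      Y = Pd * E * Dd + Sd * S * Cd * E * Qd + (1 - Pd * P) * (1 - Sd * S) * U₁
          + (1 - Pd * P) * U₂ * (1 - Q * Qd) + U₃ * (1 - D * Dd) := by
  have hSE : S * Cd * E * Qd = S * Y * Q * Qd :=
    mul_pinv_mul_rhs_mul_pinv_eq hB hC hP hQ hQd hS hXY
  have hPSd : P * Sd = 0 := hPd.mul_pinv_eq_zero_of_isMP_mul_one_sub_pinv_mul (hS ▸ hSd)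
  exact ⟨Y * Q * Qd, Y, Pd * P * Y, X, Ad * A * X,
    solution_form_left (rhs_sub_mul_pinv_mul_rhs_eq hA hP hPd hS hXY) hSE,
    solution_form_right (pinv_mul_rhs_eq hA hP hPd hXY) hSE hPSd⟩

/-- With `P = R_A C`, `Q = D L_B`, `S = C L_P`, every solution `(X, Y)` of
`A X B + C Y D = E` has the displayed parametric form for some `U₁, …, U₅`. -/
theorem axb_plus_cyd_solution_form {m a b n c d : Type*}
    [Fintype m] [Fintype a] [Fintype b] [Fintype n] [Fintype c] [Fintype d]
    [DecidableEq m] [DecidableEq n] [DecidableEq a] [DecidableEq b]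
    [DecidableEq c] [DecidableEq d]
    (A : Matrix m a (Quaternion ℝ)) (B : Matrix b n (Quaternion ℝ))
    (C : Matrix m c (Quaternion ℝ)) (D : Matrix d n (Quaternion ℝ))
    (E : Matrix m n (Quaternion ℝ))
    (Ad : Matrix a m (Quaternion ℝ)) (Bd : Matrix n b (Quaternion ℝ))
    (Cd : Matrix c m (Quaternion ℝ)) (Dd : Matrix n d (Quaternion ℝ))
    (hA : IsMP A Ad) (hB : IsMP B Bd) (hC : IsMP C Cd) (hD : IsMP D Dd)
    (P : Matrix m c (Quaternion ℝ)) (Q : Matrix d n (Quaternion ℝ))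
    (hP : P = (1 - A * Ad) * C) (hQ : Q = D * (1 - Bd * B))
    (Pd : Matrix c m (Quaternion ℝ)) (Qd : Matrix n d (Quaternion ℝ))
    (hPd : IsMP P Pd) (hQd : IsMP Q Qd)
    (S : Matrix m c (Quaternion ℝ)) (hS : S = C * (1 - Pd * P))
    (Sd : Matrix c m (Quaternion ℝ)) (hSd : IsMP S Sd)
    (X : Matrix a b (Quaternion ℝ)) (Y : Matrix c d (Quaternion ℝ))
    (hXY : A * X * B + C * Y * D = E) :
    ∃ (U₁ U₂ U₃ : Matrix c d (Quaternion ℝ)) (U₄ U₅ : Matrix a b (Quaternion ℝ)),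
      X = Ad * E * Bd - Ad * C * Pd * E * Bd - Ad * S * Cd * E * Qd * D * Bd
          - Ad * S * U₂ * (1 - Q * Qd) * D * Bd
          + (1 - Ad * A) * U₄ + U₅ * (1 - B * Bd) ∧
      Y = Pd * E * Dd + Sd * S * Cd * E * Qd + (1 - Pd * P) * (1 - Sd * S) * U₁
          + (1 - Pd * P) * U₂ * (1 - Q * Qd) + U₃ * (1 - D * Dd) :=
  axb_plus_cyd_solution_form_general A B C D E Ad Bd Cd Dd hA hB hC P Q hP hQ Pd Qd hPd hQd S hS Sd
    hSd X Y hXY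
end
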